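/- Let p_n be the number of elements of F₂ of word length at most n that are NOT the identity and NOT conjugate to any power of α, β, or αβ, and let h_n be the number of all elements of word length at most n. Then p_n / h_n → 1 as n → ∞. -/

import Mathlib

abbrev F2 := FreeGroup (Fin 2)

def α : F2 := FreeGroup.of 0

def β : F2 := FreeGroup.of 1

/-- Number of pseudo-Anosov-type elements (nontrivial, not conjugate to a power of
`α`, `β`, or `αβ`) of word length at most `n`. -/
noncomputable def pABall (n : ℕ) : ℕ :=
  Nat.card {g : F2 | FreeGroup.norm g ≤ n ∧ g ≠ 1 ∧
    ¬ ∃ (w : F2) (k : ℤ) (γ : F2), γ ∈ ({α, β, α * β} : Set F2) ∧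
      g = w * γ ^ k * w⁻¹}

/-- Number of all elements of word length at most `n`. -/
noncomputable def ball (n : ℕ) : ℕ :=
  Nat.card {g : F2 | FreeGroup.norm g ≤ n}

/-!
Conjugating a cyclically reduced word `c` by a reduced word `B` causes no cancellation unless the
last letter of `B` cancels against an end of `c`; that letter can then be absorbed into `c`. The
cyclically reduced words conjugate to `α^±1`, `β^±1`, `(αβ)^±1` form a finite set closed under this
absorption, so every element `w γᵏ w⁻¹` of word length at most `n` is spelled `B cᵐ B⁻¹` without
cancellation, with `|B| ≤ n / 2` and `m ≤ n`. There are `O(n² 3^(n/2))` such spellings, while the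
ball of radius `n` contains the `2ⁿ` positive words of length `n`.
-/

open List Finset Filter Topology

namespace FreeGroup

variable {ι : Type*}

theorem IsReduced.of_cons {x : ι × Bool} {L : List (ι × Bool)} (h : IsReduced (x :: L)) :
    IsReduced L :=
  h.infix (suffix_cons x L).isInfix

theorem isReduced_map_true (L : List ι) : IsReduced (L.map (·, true)) :=
  (pairwise_map.2 (pairwise_of_forall fun _ _ _ => rfl)).isChain

theorem mk_append_append_invRev (A L : List (ι × Bool)) :
    mk (A ++ L ++ invRev A) = mk A * mk L * (mk A)⁻¹ := by
  rw [inv_mk, mul_mk, mul_mk]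

section DecidableEq

variable [DecidableEq ι]

instance : DecidablePred (IsReduced (α := ι)) := fun L =>
  inferInstanceAs (Decidable (L.IsChain _))

instance : DecidablePred (IsCyclicallyReduced (α := ι)) := fun L =>
  inferInstanceAs (Decidable (IsReduced L ∧ _))

theorem IsReduced.invRev {L : List (ι × Bool)} (h : IsReduced L) : IsReduced (invRev L) := by
  rw [isReduced_iff_reduce_eq, reduce_invRev, h.reduce_eq]

theorem IsReduced.append_append_invRev {A c : List (ι × Bool)} {x : ι × Bool}
    (hA : IsReduced (A ++ [x])) (hc : IsReduced (x :: c ++ FreeGroup.invRev [x])) :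
    IsReduced (A ++ [x] ++ c ++ FreeGroup.invRev (A ++ [x])) := by
  have h₁ : IsReduced (A ++ [x] ++ c ++ FreeGroup.invRev [x]) := by
    simpa using hA.append_overlap hc (cons_ne_nil _ _)
  have h₂ := h₁.append_overlap (L₃ := FreeGroup.invRev A)
    (by simpa [invRev_append] using hA.invRev) (by simp [FreeGroup.invRev])
  simpa [invRev_append] using h₂

section ConjClosed

variable {S : Set (List (ι × Bool))} (hS : ∀ c ∈ S, IsReduced c)
  (hS_conj : ∀ c ∈ S, ∀ x, ¬ IsReduced (x :: c ++ invRev [x]) → reduce (x :: c ++ invRev [x]) ∈ S)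
include hS hS_conj

theorem exists_isReduced_mk_append_append_invRev_eq {A : List (ι × Bool)} (hA : IsReduced A)
    {c : List (ι × Bool)} (hc : c ∈ S) :
    ∃ B, ∃ c' ∈ S, IsReduced (B ++ c' ++ invRev B) ∧
      mk (A ++ c ++ invRev A) = mk (B ++ c' ++ invRev B) := by
  induction A using List.reverseRecOn generalizing c with
  | nil => exact ⟨[], c, hc, by simpa using hS c hc, rfl⟩
  | append_singleton A x ih =>
    by_cases hx : IsReduced (x :: c ++ invRev [x])
    · exact ⟨A ++ [x], c, hc, hA.append_append_invRev hx, rfl⟩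
    · obtain ⟨B, c', hc', hB, h⟩ :=
        ih (hA.infix (prefix_append _ _).isInfix) (hS_conj c hc x hx)
      refine ⟨B, c', hc', hB, h ▸ ?_⟩
      rw [mk_append_append_invRev, mk_append_append_invRev, reduce.self,
        show x :: c = [x] ++ c from rfl, mk_append_append_invRev, ← mul_mk]
      group

theorem exists_isReduced_conj_pow_eq (w : FreeGroup ι) {c : List (ι × Bool)} (hc : c ∈ S)
    (m : ℕ) :
    ∃ B, ∃ c' ∈ S, IsReduced (B ++ c' ++ invRev B) ∧
      w * mk c ^ m * w⁻¹ = mk B * mk c' ^ m * (mk B)⁻¹ := by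
  obtain ⟨B, c', hc', hB, h⟩ :=
    exists_isReduced_mk_append_append_invRev_eq hS hS_conj isReduced_toWord hc (A := w.toWord)
  rw [mk_append_append_invRev, mk_append_append_invRev, mk_toWord] at h
  exact ⟨B, c', hc', hB, by rw [← conj_pow, h, conj_pow]⟩

end ConjClosed

theorem norm_mk_mul_pow_mul_inv {B c : List (ι × Bool)} (hB : IsReduced (B ++ c ++ invRev B))
    (hc : IsCyclicallyReduced c) {m : ℕ} (hm : m ≠ 0) :
    norm (mk B * mk c ^ m * (mk B)⁻¹) = 2 * B.length + m * c.length := by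
  rw [pow_mk, ← mk_append_append_invRev, norm, toWord_mk,
    (hB.append_flatten_replicate_append hc hm).reduce_eq]
  simp only [length_append, length_flatten, map_replicate, sum_replicate, smul_eq_mul,
    invRev_length]
  ring

variable [Fintype ι]

def reducedWords : ℕ → Finset (List (ι × Bool))
  | 0 => {[]}
  | k + 1 => (reducedWords k).biUnion fun L => (univ.filter (IsReduced <| · :: L)).image (· :: L)

theorem mem_reducedWords {k : ℕ} {L : List (ι × Bool)} :
    L ∈ reducedWords k ↔ L.length = k ∧ IsReduced L := by
  induction k generalizing L with
  | zero => simp +contextual [reducedWords]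
  | succ k ih =>
    cases L with
    | nil => simp [reducedWords]
    | cons x L =>
      simp only [reducedWords, mem_biUnion, Finset.mem_image, Finset.mem_filter, mem_univ,
        true_and, ih, length_cons, Nat.add_right_cancel_iff, cons.injEq]
      constructor
      · rintro ⟨L', ⟨rfl, -⟩, x', hx', rfl, rfl⟩
        exact ⟨rfl, hx'⟩
      · rintro ⟨rfl, h⟩
        exact ⟨L, ⟨rfl, h.of_cons⟩, x, h, rfl, rfl⟩

theorem card_reducedWords_succ_le (k : ℕ) :
    #(reducedWords (k + 1) : Finset (List (ι × Bool))) ≤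
      2 * Fintype.card ι * (2 * Fintype.card ι - 1) ^ k := by
  induction k with
  | zero =>
    simp only [reducedWords, singleton_biUnion, pow_zero, mul_one]
    refine card_image_le.trans ((card_filter_le _ _).trans ?_)
    simp [mul_comm]
  | succ k ih =>
    rw [reducedWords, pow_succ, ← mul_assoc]
    refine (card_biUnion_le_card_mul _ _ _ fun L hL => ?_).trans (Nat.mul_le_mul_right _ ih)
    obtain ⟨y, L, rfl⟩ := exists_cons_of_length_eq_add_one (mem_reducedWords.1 hL).1
    have : univ.filter (IsReduced <| · :: y :: L) ⊆ univ.erase (y.1, !y.2) := fun x hx => by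
      simp only [Finset.mem_filter, mem_univ, true_and, isReduced_cons_cons] at hx
      simp only [Finset.mem_erase, mem_univ, and_true]
      rintro rfl
      simp at hx
    refine card_image_le.trans ((card_le_card this).trans ?_)
    simp [mul_comm]

def reducedWordsLE (n : ℕ) : Finset (List (ι × Bool)) :=
  (Finset.range (n + 1)).biUnion reducedWords

theorem mem_reducedWordsLE {n : ℕ} {L : List (ι × Bool)} :
    L ∈ reducedWordsLE n ↔ L.length ≤ n ∧ IsReduced L := by
  simp [reducedWordsLE, mem_reducedWords]

theorem card_reducedWordsLE_le [Nonempty ι] (n : ℕ) :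
    #(reducedWordsLE n : Finset (List (ι × Bool))) ≤
      (n + 1) * (2 * Fintype.card ι * (2 * Fintype.card ι - 1) ^ n) := by
  have hr : 1 ≤ 2 * Fintype.card ι - 1 := by have := Fintype.card_pos (α := ι); omega
  refine (card_biUnion_le_card_mul _ _ _ fun k hk => ?_).trans (by rw [card_range])
  cases k with
  | zero => simpa [reducedWords] using Nat.mul_le_mul (by omega) (Nat.one_le_pow _ _ hr)
  | succ k =>
    rw [Finset.mem_range] at hk
    exact (card_reducedWords_succ_le k).trans
      (Nat.mul_le_mul_left _ (Nat.pow_le_pow_right hr (by omega)))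

theorem finite_setOf_norm_le (n : ℕ) : {g : FreeGroup ι | norm g ≤ n}.Finite :=
  ((reducedWordsLE n).finite_toSet.image mk).subset fun g hg =>
    ⟨g.toWord, mem_reducedWordsLE.2 ⟨hg, isReduced_toWord⟩, mk_toWord⟩

theorem card_pow_le_card_setOf_norm_le (n : ℕ) :
    Fintype.card ι ^ n ≤ Nat.card {g : FreeGroup ι | norm g ≤ n} := by
  have := (finite_setOf_norm_le (ι := ι) n).to_subtype
  have htoWord (v : Fin n → ι) :
      (mk ((ofFn v).map (·, true))).toWord = (ofFn v).map (·, true) :=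
    (isReduced_map_true _).reduce_eq
  let positive (v : Fin n → ι) : {g : FreeGroup ι | norm g ≤ n} :=
    ⟨mk ((ofFn v).map (·, true)), by
      change (toWord _).length ≤ n
      rw [htoWord]
      simp⟩
  have : Function.Injective positive := fun v₁ v₂ h => by
    have := congrArg (fun g : {g : FreeGroup ι | norm g ≤ n} => g.1.toWord) h
    simp only [positive, htoWord] at this
    exact ofFn_injective (map_injective_iff.2 (fun _ _ h => (Prod.mk.inj h).1) this)
  simpa using Nat.card_le_card_of_injective positive this

end DecidableEq

end FreeGroup

open FreeGroup

/-- The cyclic permutations of the reduced words of `α^±1`, `β^±1` and `(αβ)^±1`. -/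
def reducibleCores : Finset (List (Fin 2 × Bool)) :=
  {[(0, true)], [(0, false)], [(1, true)], [(1, false)],
    [(0, true), (1, true)], [(1, true), (0, true)], [(1, false), (0, false)],
    [(0, false), (1, false)]}

theorem isCyclicallyReduced_of_mem_reducibleCores :
    ∀ c ∈ reducibleCores, IsCyclicallyReduced c := by decide

theorem length_pos_of_mem_reducibleCores : ∀ c ∈ reducibleCores, 0 < c.length := by decide

theorem reduce_conj_mem_reducibleCores :
    ∀ c ∈ reducibleCores, ∀ x, ¬ IsReduced (x :: c ++ invRev [x]) →
      reduce (x :: c ++ invRev [x]) ∈ reducibleCores := by decide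

theorem toWord_mem_reducibleCores {γ : F2} (hγ : γ ∈ ({α, β, α * β} : Set F2)) :
    γ.toWord ∈ reducibleCores ∧ γ⁻¹.toWord ∈ reducibleCores := by
  rcases hγ with rfl | rfl | rfl <;> decide

def IsReducible (g : F2) : Prop :=
  ∃ (w : F2) (k : ℤ) (γ : F2), γ ∈ ({α, β, α * β} : Set F2) ∧ g = w * γ ^ k * w⁻¹

theorem IsReducible.one : IsReducible 1 := ⟨1, 0, α, by simp, by simp⟩

theorem IsReducible.exists_isReduced_eq {g : F2} (h : IsReducible g) :
    ∃ B, ∃ c ∈ reducibleCores, ∃ m : ℕ, IsReduced (B ++ c ++ invRev B) ∧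
      g = mk B * mk c ^ m * (mk B)⁻¹ := by
  obtain ⟨w, k, γ, hγ, rfl⟩ := h
  obtain ⟨x, hx, hk⟩ : ∃ x : F2, x.toWord ∈ reducibleCores ∧ γ ^ k = x ^ k.natAbs := by
    rcases Int.natAbs_eq k with hk | hk
    · exact ⟨γ, (toWord_mem_reducibleCores hγ).1, by rw [hk, zpow_natCast, Int.natAbs_natCast]⟩
    · refine ⟨γ⁻¹, (toWord_mem_reducibleCores hγ).2, ?_⟩
      rw [hk, zpow_neg, zpow_natCast, inv_pow, Int.natAbs_neg, Int.natAbs_natCast]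
  obtain ⟨B, c, hc, hB, h⟩ := exists_isReduced_conj_pow_eq
    (fun c hc => (isCyclicallyReduced_of_mem_reducibleCores c hc).isReduced)
    reduce_conj_mem_reducibleCores w hx k.natAbs
  exact ⟨B, c, hc, k.natAbs, hB, by rw [hk, ← h, mk_toWord]⟩

def reducibleBall (n : ℕ) : Set F2 := {g | FreeGroup.norm g ≤ n ∧ IsReducible g}

theorem reducibleBall_subset (n : ℕ) : reducibleBall n ⊆
    ((reducedWordsLE (n / 2) ×ˢ reducibleCores ×ˢ Finset.range (n + 1)).image
      fun p : List (Fin 2 × Bool) × List (Fin 2 × Bool) × ℕ =>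
        FreeGroup.mk p.1 * FreeGroup.mk p.2.1 ^ p.2.2 * (FreeGroup.mk p.1)⁻¹ : Finset F2) := by
  rintro g ⟨hg, hred⟩
  obtain ⟨B, c, hc, m, hB, rfl⟩ := hred.exists_isReduced_eq
  simp only [coe_image, coe_product, Set.mem_image, Set.mem_prod, mem_coe, mem_reducedWordsLE,
    Finset.mem_range, Prod.exists]
  rcases eq_or_ne m 0 with rfl | hm
  · exact ⟨[], c, 0, ⟨⟨by simp, by simp⟩, hc, by omega⟩,
      by simp only [pow_zero, mul_one, mul_inv_cancel]⟩
  · rw [norm_mk_mul_pow_mul_inv hB (isCyclicallyReduced_of_mem_reducibleCores c hc) hm] at hg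
    have : m ≤ m * c.length := Nat.le_mul_of_pos_right m (length_pos_of_mem_reducibleCores c hc)
    exact ⟨B, c, m, ⟨⟨by omega, hB.infix ⟨[], c ++ invRev B, by simp⟩⟩, hc, by omega⟩, rfl⟩

theorem card_reducibleBall_le (n : ℕ) :
    Nat.card (reducibleBall n) ≤ 32 * (n + 1) ^ 2 * 3 ^ (n / 2) := by
  have hcores : #reducibleCores = 8 := rfl
  rw [Nat.card_coe_set_eq]
  calc (reducibleBall n).ncard
      ≤ #(reducedWordsLE (n / 2) ×ˢ reducibleCores ×ˢ Finset.range (n + 1)) :=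
        ((Set.ncard_le_ncard (reducibleBall_subset n)).trans_eq (Set.ncard_coe_finset _)).trans
          card_image_le
    _ = #(reducedWordsLE (n / 2)) * (8 * (n + 1)) := by
        rw [card_product, card_product, card_range, hcores]
    _ ≤ (n / 2 + 1) * (2 * 2 * (2 * 2 - 1) ^ (n / 2)) * (8 * (n + 1)) := by
        gcongr
        simpa using card_reducedWordsLE_le (ι := Fin 2) (n / 2)
    _ ≤ (n + 1) * (4 * 3 ^ (n / 2)) * (8 * (n + 1)) := by gcongr; omega
    _ = 32 * (n + 1) ^ 2 * 3 ^ (n / 2) := by ring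

theorem pABall_add_card_reducibleBall (n : ℕ) :
    pABall n + Nat.card (reducibleBall n) = ball n := by
  have hsub : reducibleBall n ⊆ {g | FreeGroup.norm g ≤ n} := fun _ hg => hg.1
  have hpA : {g : F2 | FreeGroup.norm g ≤ n ∧ g ≠ 1 ∧ ¬ IsReducible g} =
      {g | FreeGroup.norm g ≤ n} \ reducibleBall n := by
    ext g
    simp only [Set.mem_ofPred_eq, Set.mem_sdiff, reducibleBall, not_and]
    exact ⟨fun h => ⟨h.1, fun _ => h.2.2⟩,
      fun h => ⟨h.1, by rintro rfl; exact h.2 h.1 IsReducible.one, h.2 h.1⟩⟩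
  rw [pABall, ball, Nat.card_coe_set_eq, Nat.card_coe_set_eq, Nat.card_coe_set_eq]
  exact hpA ▸ Set.ncard_sdiff_add_ncard_of_subset hsub (finite_setOf_norm_le n)

theorem two_pow_le_ball (n : ℕ) : 2 ^ n ≤ ball n := by
  have := card_pow_le_card_setOf_norm_le (ι := Fin 2) n
  rwa [Fintype.card_fin] at this

theorem tendsto_sq_mul_three_pow_half_div_two_pow :
    Tendsto (fun n : ℕ => ((n : ℝ) + 1) ^ 2 * 3 ^ (n / 2) / 2 ^ n) atTop (𝓝 0) := by
  have hr₀ : 0 < √3 / 2 := by positivity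
  have hr : |√3 / 2| < 1 := by
    rw [abs_of_pos hr₀, div_lt_one two_pos, Real.sqrt_lt' two_pos]
    norm_num
  have h : Tendsto (fun n : ℕ => ((n : ℝ) + 1) ^ 2 * (√3 / 2) ^ n) atTop (𝓝 0) := by
    have := ((tendsto_add_atTop_iff_nat 1).2
      (tendsto_pow_const_mul_const_pow_of_abs_lt_one 2 hr)).div_const (√3 / 2)
    rw [zero_div] at this
    refine this.congr fun n => ?_
    push_cast
    field_simp
    ring
  refine squeeze_zero (fun n => by positivity) (fun n => ?_) h
  rw [div_pow, ← mul_div_assoc]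
  gcongr
  calc (3 : ℝ) ^ (n / 2) = √3 ^ (2 * (n / 2)) := by rw [pow_mul, Real.sq_sqrt zero_le_three]
    _ ≤ √3 ^ n := pow_le_pow_right₀ (Real.one_le_sqrt.2 (by norm_num)) (Nat.mul_div_le n 2)

theorem tendsto_card_reducibleBall_div_ball :
    Tendsto (fun n => (Nat.card (reducibleBall n) : ℝ) / ball n) atTop (𝓝 0) := by
  have := tendsto_sq_mul_three_pow_half_div_two_pow.const_mul 32
  rw [mul_zero] at this
  refine squeeze_zero (fun n => by positivity) (fun n => ?_) this
  calc (Nat.card (reducibleBall n) : ℝ) / ball n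
      ≤ ((32 * (n + 1) ^ 2 * 3 ^ (n / 2) : ℕ) : ℝ) / 2 ^ n :=
        div_le_div₀ (by positivity) (by exact_mod_cast card_reducibleBall_le n) (by positivity)
          (by exact_mod_cast two_pow_le_ball n)
    _ = 32 * (((n : ℝ) + 1) ^ 2 * 3 ^ (n / 2) / 2 ^ n) := by push_cast; ring

/-- Almost every element is pseudo-Anosov: the proportion of pseudo-Anosov-type
elements in the ball of radius `n` tends to `1` as `n → ∞`. -/
theorem pseudoAnosov_proportion_tendsto_one :
    Filter.Tendsto (fun n => (pABall n : ℝ) / (ball n : ℝ))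
      Filter.atTop (nhds 1) := by
  have hball (n : ℕ) : (ball n : ℝ) ≠ 0 := by
    exact_mod_cast ((pow_pos two_pos n).trans_le (two_pow_le_ball n)).ne'
  have hpA (n : ℕ) : (pABall n : ℝ) / ball n = 1 - (Nat.card (reducibleBall n) : ℝ) / ball n := by
    rw [eq_sub_iff_add_eq, ← add_div, ← Nat.cast_add, pABall_add_card_reducibleBall,
      div_self (hball n)]
  simpa [hpA] using tendsto_card_reducibleBall_div_ball.const_sub 1
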